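/- Let a robot move in the plane at constant speed v̄ > 0 according to ṙ(t) = v̄·e(θ(t)) with e(θ) := (cos θ, sin θ) and θ differentiable, in a domain where D : ℝ × ℝ² → ℝ is three times differentiable (in particular twice continuously differentiable) and ∇D(t, r(t)) ≠ 0. Evaluate at (t, r(t)): ρ := ‖∇D‖, N := ∇D/ρ, T := R_{−π/2}N, λ := −D′_t/ρ, v_ρ := ⟨∇D′_t + λD″N, N⟩/ρ, ω := −⟨∇D′_t + λD″N, T⟩/ρ, α := −(D″_tt + λ⟨∇D′_t, N⟩)/ρ − λ·v_ρ, κ := −⟨D″T, T⟩/ρ, τ_ρ := ⟨D″N, T⟩/ρ, n_ρ := ⟨D″N, N⟩/ρ, and set v_Δ := v̄·⟨N, e(θ(t))⟩ − λ and v_T := v̄·⟨e(θ(t)), T⟩. Then the field reading d(t) := D(t, r(t)) is twice differentiable and d̈(t) = ρ·[(θ̇(t) − 2ω − κ·v_T + 2·v_Δ·τ_ρ)·v_T + 2·v_ρ·v_Δ − α + v_Δ²·n_ρ]. -/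

import Mathlib

open Real Set
open scoped RealInnerProductSpace
noncomputable section

/-- The plane ℝ². -/
abbrev Plane := EuclideanSpace ℝ (Fin 2)

/-- Spatial gradient ∇D of the field. -/
def sgrad (D : ℝ × Plane → ℝ) (t : ℝ) (r : Plane) : Plane :=
  gradient (fun p => D (t, p)) r

/-- Partial time derivative D′_t of the field. -/
def dT (D : ℝ × Plane → ℝ) (t : ℝ) (r : Plane) : ℝ :=
  deriv (fun s => D (s, r)) t

/-- Second partial time derivative D″_tt of the field. -/
def dTT (D : ℝ × Plane → ℝ) (t : ℝ) (r : Plane) : ℝ :=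
  deriv (fun s => dT D s r) t

/-- Spatial gradient ∇D′_t of the partial time derivative. -/
def sgradDt (D : ℝ × Plane → ℝ) (t : ℝ) (r : Plane) : Plane :=
  gradient (fun p => dT D t p) r

/-- Spatial Hessian D″ applied to a vector v. -/
def hess (D : ℝ × Plane → ℝ) (t : ℝ) (r : Plane) (v : Plane) : Plane :=
  fderiv ℝ (fun p => sgrad D t p) r v

/-- Clockwise rotation through π/2, i.e. R_{−π/2}. -/
def rotCW (v : Plane) : Plane := !₂[v 1, -(v 0)]

/-- The unit normal N = ∇D/‖∇D‖ of the isoline. -/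
def unitN (D : ℝ × Plane → ℝ) (t : ℝ) (r : Plane) : Plane :=
  ‖sgrad D t r‖⁻¹ • sgrad D t r

/-- The unit tangent T = R_{−π/2} N of the isoline. -/
def unitT (D : ℝ × Plane → ℝ) (t : ℝ) (r : Plane) : Plane :=
  rotCW (unitN D t r)

/-- The density of isolines ρ = ‖∇D‖. -/
def rho (D : ℝ × Plane → ℝ) (t : ℝ) (r : Plane) : ℝ := ‖sgrad D t r‖

/-- The front velocity λ = −D′_t/‖∇D‖ of the isoline. -/
def lam (D : ℝ × Plane → ℝ) (t : ℝ) (r : Plane) : ℝ :=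
  -(dT D t r) / ‖sgrad D t r‖

/-- The proportional growth rate v_ρ = ⟨∇D′_t + λD″N, N⟩/‖∇D‖ of the density ρ
    along the moving isoline. -/
def vRho (D : ℝ × Plane → ℝ) (t : ℝ) (r : Plane) : ℝ :=
  ⟪sgradDt D t r + lam D t r • hess D t r (unitN D t r), unitN D t r⟫ / ‖sgrad D t r‖

/-- The angular velocity ω = −⟨∇D′_t + λD″N, T⟩/‖∇D‖ of rotation of the isoline. -/
def omg (D : ℝ × Plane → ℝ) (t : ℝ) (r : Plane) : ℝ :=
  -⟪sgradDt D t r + lam D t r • hess D t r (unitN D t r), unitT D t r⟫ / ‖sgrad D t r‖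

/-- The front acceleration α of the isoline. -/
def alph (D : ℝ × Plane → ℝ) (t : ℝ) (r : Plane) : ℝ :=
  -(dTT D t r + lam D t r * ⟪sgradDt D t r, unitN D t r⟫) / ‖sgrad D t r‖
    - lam D t r * vRho D t r

/-- The signed curvature κ = −⟨D″T, T⟩/‖∇D‖ of the isoline. -/
def kap (D : ℝ × Plane → ℝ) (t : ℝ) (r : Plane) : ℝ :=
  -⟪hess D t r (unitT D t r), unitT D t r⟫ / ‖sgrad D t r‖

/-- The proportional growth rate τ_ρ = ⟨D″N, T⟩/‖∇D‖ of the density ρ under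
    tangential displacement. -/
def tauRho (D : ℝ × Plane → ℝ) (t : ℝ) (r : Plane) : ℝ :=
  ⟪hess D t r (unitN D t r), unitT D t r⟫ / ‖sgrad D t r‖

/-- The proportional growth rate n_ρ = ⟨D″N, N⟩/‖∇D‖ of the density ρ under
    normal displacement. -/
def nRho (D : ℝ × Plane → ℝ) (t : ℝ) (r : Plane) : ℝ :=
  ⟪hess D t r (unitN D t r), unitN D t r⟫ / ‖sgrad D t r‖

/-- The angular velocity ω_∇ = −⟨∇D′_t, T⟩/‖∇D‖ of rotation of the gradient. -/
def omgGrad (D : ℝ × Plane → ℝ) (t : ℝ) (r : Plane) : ℝ :=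
  -⟪sgradDt D t r, unitT D t r⟫ / ‖sgrad D t r‖

/-- The unit velocity-orientation vector e(θ) = (cos θ, sin θ). -/
def eVec (θ : ℝ) : Plane := !₂[Real.cos θ, Real.sin θ]

/-!
Write `d(s) = D(s, r(s))` and `B` for the second derivative of `D` at `(t, r(t))`. The chain rule
applied twice gives `d̈ = B (1, ṙ) (1, ṙ) + DD(t, r(t)) (0, r̈)`, and since the speed is constant,
`r̈ = v̄ θ̇ · (−R_{−π/2} e(θ))`, so the last term is `ρ θ̇ v_T`. Expanding `ṙ = ⟨ṙ, N⟩ N + ⟨ṙ, T⟩ T`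
in the orthonormal isoline frame and using the symmetry of `B`, the quadratic form becomes a
combination of `D″_tt`, `⟨∇D′_t, N⟩`, `⟨∇D′_t, T⟩`, `⟨D″N, N⟩`, `⟨D″N, T⟩`, `⟨D″T, T⟩`. The
kinematic quantities of the statement are these same numbers divided by `ρ` (with `λ` shifting
`⟨ṙ, N⟩` to `v_Δ`), so what is left is algebra.
-/

open Filter
open scoped Topology

section Curve

variable {𝕜 E F G : Type*} [NontriviallyNormedField 𝕜] [NormedAddCommGroup E] [NormedSpace 𝕜 E]
  [NormedAddCommGroup F] [NormedSpace 𝕜 F] [NormedAddCommGroup G] [NormedSpace 𝕜 G]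

lemma ContDiffAt.hasFDerivAt_fderiv {f : E → F} {x : E} (hf : ContDiffAt 𝕜 2 f x) :
    HasFDerivAt (fderiv 𝕜 f) (fderiv 𝕜 (fderiv 𝕜 f) x) x :=
  ((hf.fderiv_right (m := 1) le_rfl).differentiableAt one_ne_zero).hasFDerivAt

lemma ContDiffAt.eventually_differentiableAt {f : E → F} {x : E} (hf : ContDiffAt 𝕜 2 f x) :
    ∀ᶠ y in 𝓝 x, DifferentiableAt 𝕜 f y :=
  (hf.eventually (by simp)).mono fun _ hy => hy.differentiableAt two_ne_zero

variable {D : 𝕜 × E → G} {r r' : 𝕜 → E} {a : E} {t : 𝕜}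

lemma hasDerivAt_comp_prodMk (hr : HasDerivAt r (r' t) t) (hD : DifferentiableAt 𝕜 D (t, r t)) :
    HasDerivAt (fun s => D (s, r s)) (fderiv 𝕜 D (t, r t) (1, r' t)) t :=
  hD.hasFDerivAt.comp_hasDerivAt t ((hasDerivAt_id t).prodMk hr)

lemma hasDerivAt_deriv_comp_prodMk (hr : ∀ᶠ s in 𝓝 t, HasDerivAt r (r' s) s)
    (hr' : HasDerivAt r' a t) (hD : ContDiffAt 𝕜 2 D (t, r t)) :
    HasDerivAt (fun s => deriv (fun u => D (u, r u)) s)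
      (fderiv 𝕜 (fderiv 𝕜 D) (t, r t) (1, r' t) (1, r' t) + fderiv 𝕜 D (t, r t) (0, a)) t := by
  have hc : HasDerivAt (fun s => fderiv 𝕜 D (s, r s))
      (fderiv 𝕜 (fderiv 𝕜 D) (t, r t) (1, r' t)) t :=
    hD.hasFDerivAt_fderiv.comp_hasDerivAt t ((hasDerivAt_id t).prodMk hr.self_of_nhds)
  have hv : HasDerivAt (fun s => ((1 : 𝕜), r' s)) (0, a) t :=
    (hasDerivAt_const t 1).prodMk hr'
  have hd : HasDerivAt (fun s => fderiv 𝕜 D (s, r s) (1, r' s))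
      (fderiv 𝕜 (fderiv 𝕜 D) (t, r t) (1, r' t) (1, r' t) + fderiv 𝕜 D (t, r t) (0, a)) t :=
    hc.clm_apply hv
  have hDs : ∀ᶠ s in 𝓝 t, DifferentiableAt 𝕜 D (s, r s) :=
    (continuousAt_id.prodMk hr.self_of_nhds.continuousAt).eventually
      hD.eventually_differentiableAt
  refine hd.congr_of_eventuallyEq ?_
  filter_upwards [hr, hDs] with s hrs hDs using (hasDerivAt_comp_prodMk hrs hDs).deriv

end Curve

section PlaneGeometry

lemma rotCW_smul (c : ℝ) (v : Plane) : rotCW (c • v) = c • rotCW v := by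
  ext i; fin_cases i <;> simp [rotCW]

lemma inner_rotCW_left (a b : Plane) : ⟪rotCW a, b⟫ = -⟪a, rotCW b⟫ := by
  simp [rotCW, PiLp.inner_apply, Fin.sum_univ_two]

lemma eq_inner_smul_add_inner_rotCW_smul {n : Plane} (hn : ‖n‖ = 1) (v : Plane) :
    v = ⟪v, n⟫ • n + ⟪v, rotCW n⟫ • rotCW n := by
  have hn' : n 0 ^ 2 + n 1 ^ 2 = 1 := by
    simpa [EuclideanSpace.norm_eq, Fin.sum_univ_two, Real.sqrt_eq_one] using hn
  ext i; fin_cases i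
  · simp [rotCW, PiLp.inner_apply, Fin.sum_univ_two]
    linear_combination (-(v 0)) * hn'
  · simp [rotCW, PiLp.inner_apply, Fin.sum_univ_two]
    linear_combination (-(v 1)) * hn'

lemma eVec_eq (x : ℝ) : eVec x = Real.cos x • !₂[1, 0] + Real.sin x • !₂[0, 1] := by
  ext i; fin_cases i <;> simp [eVec]

lemma HasDerivAt.eVec_comp {θ : ℝ → ℝ} {θ' t : ℝ} (hθ : HasDerivAt θ θ' t) :
    HasDerivAt (fun s => eVec (θ s)) (θ' • -rotCW (eVec (θ t))) t := by
  have h := (((Real.hasDerivAt_cos _).comp t hθ).smul_const (!₂[1, 0] : Plane)).add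
    (((Real.hasDerivAt_sin _).comp t hθ).smul_const (!₂[0, 1] : Plane))
  rw [show (fun s => eVec (θ s)) = _ from funext fun s => eVec_eq (θ s)]
  refine h.congr_deriv ?_
  ext i; fin_cases i <;> simp [eVec, rotCW] <;> ring

end PlaneGeometry

/-- The spatial gradient `∇(ℓ ∘ inr)` of a linear form `ℓ` on `ℝ × Plane`. -/
def spatialGradL : ((ℝ × Plane) →L[ℝ] ℝ) →L[ℝ] Plane :=
  (InnerProductSpace.toDual ℝ Plane).symm.toContinuousLinearEquiv.toContinuousLinearMap ∘L
    (ContinuousLinearMap.compL ℝ Plane (ℝ × Plane) ℝ).flip (ContinuousLinearMap.inr ℝ ℝ Plane)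

lemma inner_spatialGradL (ℓ : (ℝ × Plane) →L[ℝ] ℝ) (v : Plane) :
    ⟪spatialGradL ℓ, v⟫ = ℓ (0, v) := by
  simp [spatialGradL, InnerProductSpace.toDual_symm_apply]

section PartialDerivatives

variable {D : ℝ × Plane → ℝ} {t : ℝ} {p : Plane}

lemma dT_eq_fderiv (h : DifferentiableAt ℝ D (t, p)) : dT D t p = fderiv ℝ D (t, p) (1, 0) :=
  (h.hasFDerivAt.comp_hasDerivAt t ((hasDerivAt_id t).prodMk (hasDerivAt_const t p))).deriv

lemma sgrad_eq_spatialGradL (h : DifferentiableAt ℝ D (t, p)) :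
    sgrad D t p = spatialGradL (fderiv ℝ D (t, p)) := by
  have hd : HasFDerivAt (fun q => D (t, q))
      (fderiv ℝ D (t, p) ∘L ContinuousLinearMap.inr ℝ ℝ Plane) p :=
    h.hasFDerivAt.comp p (hasFDerivAt_prodMk_right t p)
  rw [sgrad, gradient, hd.fderiv]
  rfl

lemma inner_sgrad (h : DifferentiableAt ℝ D (t, p)) (v : Plane) :
    ⟪sgrad D t p, v⟫ = fderiv ℝ D (t, p) (0, v) := by
  rw [sgrad_eq_spatialGradL h, inner_spatialGradL]

variable (h : ContDiffAt ℝ 2 D (t, p))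
include h

lemma eventually_differentiableAt_prodMk_right :
    ∀ᶠ q in 𝓝 p, DifferentiableAt ℝ D (t, q) :=
  (continuousAt_const.prodMk continuousAt_id).eventually h.eventually_differentiableAt

lemma hasFDerivAt_fderiv_prodMk_right :
    HasFDerivAt (fun q => fderiv ℝ D (t, q))
      (fderiv ℝ (fderiv ℝ D) (t, p) ∘L ContinuousLinearMap.inr ℝ ℝ Plane) p :=
  h.hasFDerivAt_fderiv.comp p (hasFDerivAt_prodMk_right t p)

lemma dTT_eq_fderiv_fderiv :
    dTT D t p = fderiv ℝ (fderiv ℝ D) (t, p) (1, 0) (1, 0) := by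
  have hc : HasDerivAt (fun s => fderiv ℝ D (s, p)) (fderiv ℝ (fderiv ℝ D) (t, p) (1, 0)) t :=
    h.hasFDerivAt_fderiv.comp_hasDerivAt t ((hasDerivAt_id t).prodMk (hasDerivAt_const t p))
  have hd : HasDerivAt (fun s => fderiv ℝ D (s, p) (1, 0))
      (fderiv ℝ (fderiv ℝ D) (t, p) (1, 0) (1, 0)) t := by
    simpa using hc.clm_apply (hasDerivAt_const t ((1 : ℝ), (0 : Plane)))
  refine (hd.congr_of_eventuallyEq ?_).deriv
  filter_upwards [(continuousAt_id.prodMk continuousAt_const).eventually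
    h.eventually_differentiableAt] with s hs using dT_eq_fderiv hs

lemma inner_sgradDt (v : Plane) :
    ⟪sgradDt D t p, v⟫ = fderiv ℝ (fderiv ℝ D) (t, p) (0, v) (1, 0) := by
  have hd := (hasFDerivAt_fderiv_prodMk_right h).clm_apply
    (hasFDerivAt_const ((1 : ℝ), (0 : Plane)) p)
  have hev : (fun q => dT D t q) =ᶠ[𝓝 p] fun q => fderiv ℝ D (t, q) (1, 0) := by
    filter_upwards [eventually_differentiableAt_prodMk_right h] with q hq using dT_eq_fderiv hq
  rw [sgradDt, gradient, hev.fderiv_eq, hd.fderiv, InnerProductSpace.toDual_symm_apply]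
  simp

lemma inner_hess (v w : Plane) :
    ⟪hess D t p v, w⟫ = fderiv ℝ (fderiv ℝ D) (t, p) (0, v) (0, w) := by
  have hd : HasFDerivAt (fun q => spatialGradL (fderiv ℝ D (t, q)))
      (spatialGradL ∘L fderiv ℝ (fderiv ℝ D) (t, p) ∘L ContinuousLinearMap.inr ℝ ℝ Plane) p :=
    spatialGradL.hasFDerivAt.comp p (hasFDerivAt_fderiv_prodMk_right h)
  have hev : (fun q => sgrad D t q) =ᶠ[𝓝 p] fun q => spatialGradL (fderiv ℝ D (t, q)) := by
    filter_upwards [eventually_differentiableAt_prodMk_right h] with q hq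
      using sgrad_eq_spatialGradL hq
  rw [hess, hev.fderiv_eq, hd.fderiv]
  simp [inner_spatialGradL]

end PartialDerivatives

section Frame

variable {D : ℝ × Plane → ℝ} {t : ℝ} {p : Plane}

lemma rotCW_sgrad : rotCW (sgrad D t p) = rho D t p • unitT D t p := by
  by_cases h : sgrad D t p = 0
  · simp [h, rho, rotCW]
  · rw [unitT, unitN, rotCW_smul, smul_smul, rho, mul_inv_cancel₀ (norm_ne_zero_iff.mpr h),
      one_smul]

lemma norm_unitN (h : sgrad D t p ≠ 0) : ‖unitN D t p‖ = 1 :=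
  norm_smul_inv_norm h

lemma inner_sgrad_neg_rotCW (v : Plane) :
    ⟪sgrad D t p, -rotCW v⟫ = rho D t p * ⟪v, unitT D t p⟫ := by
  rw [inner_neg_right, ← neg_neg ⟪sgrad D t p, rotCW v⟫, ← inner_rotCW_left, rotCW_sgrad,
    real_inner_smul_left, real_inner_comm, neg_neg]

lemma fderiv_fderiv_apply_eq_frame_expansion (h : ContDiffAt ℝ 2 D (t, p))
    (hg : sgrad D t p ≠ 0) (v : Plane) :
    fderiv ℝ (fderiv ℝ D) (t, p) (1, v) (1, v) =
      dTT D t p + 2 * ⟪v, unitN D t p⟫ * ⟪sgradDt D t p, unitN D t p⟫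
        + 2 * ⟪v, unitT D t p⟫ * ⟪sgradDt D t p, unitT D t p⟫
        + ⟪v, unitN D t p⟫ ^ 2 * ⟪hess D t p (unitN D t p), unitN D t p⟫
        + 2 * ⟪v, unitN D t p⟫ * ⟪v, unitT D t p⟫ * ⟪hess D t p (unitN D t p), unitT D t p⟫
        + ⟪v, unitT D t p⟫ ^ 2 * ⟪hess D t p (unitT D t p), unitT D t p⟫ := by
  set N := unitN D t p
  set T := unitT D t p
  set B := fderiv ℝ (fderiv ℝ D) (t, p)
  have hsymm : ∀ x y, B x y = B y x := h.isSymmSndFDerivAt (by simp)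
  have hsplit : ((1 : ℝ), v) = (1, 0) + ⟪v, N⟫ • ((0 : ℝ), N) + ⟪v, T⟫ • ((0 : ℝ), T) := by
    conv_lhs => rw [eq_inner_smul_add_inner_rotCW_smul (norm_unitN hg) v]
    simp [N, T, unitT]
  rw [hsplit, dTT_eq_fderiv_fderiv h, inner_sgradDt h, inner_sgradDt h, inner_hess h,
    inner_hess h, inner_hess h]
  simp only [map_add, map_smul, add_apply, smul_apply, smul_eq_mul]
  rw [hsymm (1, 0) (0, N), hsymm (1, 0) (0, T), hsymm (0, T) (0, N)]
  ring

end Frame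

theorem field_reading_second_derivative_general
    (D : ℝ × Plane → ℝ) (vbar : ℝ)
    (r : ℝ → Plane) (θ : ℝ → ℝ) (hθ : Differentiable ℝ θ)
    (hr : ∀ s, HasDerivAt r (vbar • eVec (θ s)) s)
    (hD : ∀ s, ContDiffAt ℝ 3 D (s, r s))
    (hgrad : ∀ s, sgrad D s (r s) ≠ 0)
    (t : ℝ) (vΔ vT : ℝ)
    (hvΔ : vΔ = vbar * ⟪unitN D t (r t), eVec (θ t)⟫ - lam D t (r t))
    (hvT : vT = vbar * ⟪eVec (θ t), unitT D t (r t)⟫) :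
    HasDerivAt (fun s => deriv (fun u => D (u, r u)) s)
      (rho D t (r t) *
        ((deriv θ t - 2 * omg D t (r t) - kap D t (r t) * vT
            + 2 * vΔ * tauRho D t (r t)) * vT
          + 2 * vRho D t (r t) * vΔ - alph D t (r t)
          + vΔ ^ 2 * nRho D t (r t))) t := by
  have h2 : ContDiffAt ℝ 2 D (t, r t) := (hD t).of_le (by norm_num)
  have hρ : ‖sgrad D t (r t)‖ ≠ 0 := norm_ne_zero_iff.mpr (hgrad t)
  refine (hasDerivAt_deriv_comp_prodMk (Eventually.of_forall hr)
    ((hθ t).hasDerivAt.eVec_comp.const_smul vbar) h2).congr_deriv ?_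
  rw [fderiv_fderiv_apply_eq_frame_expansion h2 (hgrad t),
    ← inner_sgrad (h2.differentiableAt two_ne_zero), real_inner_smul_right, real_inner_smul_right,
    inner_sgrad_neg_rotCW]
  rw [real_inner_comm] at hvΔ
  simp only [hvΔ, hvT, rho, omg, kap, tauRho, vRho, alph, nRho, lam, inner_add_left,
    real_inner_smul_left]
  field_simp
  ring

/-- the field reading `d(t) = D(t, r(t))` of a robot moving at constant
speed `v̄` is twice differentiable with
`d̈ = ρ·[(θ̇ − 2ω − κ·v_T + 2·v_Δ·τ_ρ)·v_T + 2·v_ρ·v_Δ − α + v_Δ²·n_ρ]`,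
where `v_Δ = v̄·⟨N, e(θ)⟩ − λ` and `v_T = v̄·⟨e(θ), T⟩`. -/
theorem field_reading_second_derivative
    (D : ℝ × Plane → ℝ) (vbar : ℝ) (hv : 0 < vbar)
    (r : ℝ → Plane) (θ : ℝ → ℝ) (hθ : Differentiable ℝ θ)
    (hr : ∀ s, HasDerivAt r (vbar • eVec (θ s)) s)
    (hD : ∀ s, ContDiffAt ℝ 3 D (s, r s))
    (hgrad : ∀ s, sgrad D s (r s) ≠ 0)
    (t : ℝ) (vΔ vT : ℝ)
    (hvΔ : vΔ = vbar * ⟪unitN D t (r t), eVec (θ t)⟫ - lam D t (r t))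
    (hvT : vT = vbar * ⟪eVec (θ t), unitT D t (r t)⟫) :
    HasDerivAt (fun s => deriv (fun u => D (u, r u)) s)
      (rho D t (r t) *
        ((deriv θ t - 2 * omg D t (r t) - kap D t (r t) * vT
            + 2 * vΔ * tauRho D t (r t)) * vT
          + 2 * vRho D t (r t) * vΔ - alph D t (r t)
          + vΔ ^ 2 * nRho D t (r t))) t :=
  field_reading_second_derivative_general D vbar r θ hθ hr hD hgrad t vΔ vT hvΔ hvT
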